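/- arXiv:1309.0232 — 5 statements merged into one kernel-verified Lean document; each statement's English description precedes it below -/
import Mathlib

section
/- Let Γ ⊂ ℂ be a T_n-regular set, i.e. there exist δ > 0 and N ∈ ℕ such that ‖(T_n − z)φ‖ ≥ δ‖φ‖ for all z ∈ Γ, all φ ∈ L_n and all n ≥ N. Then Γ is contained in the resolvent set ρ(T) of T. -/
/-!
For `x ∈ Dom T`, let `ξₙ ∈ Lₙ` be its Ritz–Galerkin approximation `(Tₙ - c) ξₙ = Pₙ (T - c) x`,
where `c = m - 1` lies below the form and `Pₙ` is the orthogonal projection onto `Lₙ`. Céa's lemma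
in the norm of `H_t` and the density of `(Lₙ)` give `ξₙ → x`, and
`(Tₙ - z) ξₙ = Pₙ ((T - z) x + (c - z) (ξₙ - x))`, so the uniform bound `δ ‖ξₙ‖ ≤ ‖(Tₙ - z) ξₙ‖`
passes to the limit: `δ ‖x‖ ≤ ‖(T - z) x‖`. As `⟪T x, x⟫` is real, the same bound holds at `z̄`.
So `T - z` is injective with closed range, whose orthogonal complement `ker (T - z̄)` is trivial;
its inverse is bounded by `δ⁻¹`.
-/

open scoped ComplexInnerProductSpace
open Filter

noncomputable section

variable {H : Type*} [NormedAddCommGroup H] [InnerProductSpace ℂ H] [CompleteSpace H]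

/-- The resolvent set of a (possibly unbounded) operator given as a `LinearPMap`:
`z` belongs to it iff `T - z` has an everywhere-defined bounded two-sided inverse. -/
def pmResolventSet (T : H →ₗ.[ℂ] H) : Set ℂ :=
  {z | ∃ R : H →L[ℂ] H, (∀ y : H, ∃ hy : R y ∈ T.domain, T ⟨R y, hy⟩ - z • R y = y) ∧
        ∀ x : T.domain, R (T x - z • (x : H)) = x}

/-- The spectrum of a (possibly unbounded) operator given as a `LinearPMap`. -/
def pmSpectrum (T : H →ₗ.[ℂ] H) : Set ℂ := (pmResolventSet T)ᶜ

open scoped ComplexConjugate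
open Topology

namespace LinearPMap

variable {E : Type*} [AddCommGroup E] [Module ℂ E]

def subSMul (T : E →ₗ.[ℂ] E) (z : ℂ) : T.domain →ₗ[ℂ] E := T.toFun - z • T.domain.subtype

@[simp]
theorem subSMul_apply (T : E →ₗ.[ℂ] E) (z : ℂ) (x : T.domain) :
    T.subSMul z x = T x - z • (x : E) := rfl

end LinearPMap

theorem norm_sub_conj_smul_eq {E : Type*} [NormedAddCommGroup E] [InnerProductSpace ℂ E]
    {a φ : E} (h : ⟪φ, a⟫ = ⟪a, φ⟫) (z : ℂ) : ‖a - conj z • φ‖ = ‖a - z • φ‖ := by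
  have him : (⟪a, φ⟫).im = 0 := by
    have := congrArg Complex.im h
    rw [← inner_conj_symm, Complex.conj_im] at this
    linarith
  rw [← sq_eq_sq₀ (norm_nonneg _) (norm_nonneg _), norm_sub_sq (𝕜 := ℂ), norm_sub_sq (𝕜 := ℂ)]
  simp [inner_smul_right, norm_smul, him]

namespace IsSelfAdjoint

open LinearPMap

variable {T : H →ₗ.[ℂ] H}

theorem isFormalAdjoint_self (hT : IsSelfAdjoint T) : T.IsFormalAdjoint T := by
  have h := adjoint_isFormalAdjoint hT.dense_domain (T := T)
  rwa [isSelfAdjoint_def.mp hT] at h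

theorem exists_mem_domain_of_inner (hT : IsSelfAdjoint T) {w v : H}
    (h : ∀ u : T.domain, ⟪v, (u : H)⟫ = ⟪w, T u⟫) : ∃ hw : w ∈ T.domain, T ⟨w, hw⟩ = v := by
  have hgraph : (w, v) ∈ T.graph := by
    rw [← isSelfAdjoint_def.mp hT, mem_graph_iff]
    exact ⟨⟨w, mem_adjoint_domain_of_exists w ⟨v, h⟩⟩, rfl, adjoint_apply_eq hT.dense_domain _ h⟩
  obtain ⟨⟨w', hw'⟩, rfl, hTw⟩ := T.mem_graph_iff.mp hgraph
  exact ⟨hw', hTw⟩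

theorem norm_subSMul_conj (hT : IsSelfAdjoint T) (z : ℂ) (x : T.domain) :
    ‖T.subSMul (conj z) x‖ = ‖T.subSMul z x‖ :=
  norm_sub_conj_smul_eq (hT.isFormalAdjoint_self x x).symm z

variable {δ : ℝ} {z : ℂ}

theorem orthogonal_range_subSMul_eq_bot (hT : IsSelfAdjoint T) (hδ : 0 < δ)
    (hb : ∀ x : T.domain, δ * ‖(x : H)‖ ≤ ‖T.subSMul z x‖) :
    (LinearMap.range (T.subSMul z))ᗮ = ⊥ := by
  refine (Submodule.eq_bot_iff _).mpr fun v hv => ?_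
  have hv' : ∀ u : T.domain, ⟪conj z • v, (u : H)⟫ = ⟪v, T u⟫ := by
    intro u
    have h := Submodule.inner_right_of_mem_orthogonal (LinearMap.mem_range_self _ u) hv
    rw [← inner_conj_symm, map_eq_zero, subSMul_apply, inner_sub_right, inner_smul_right,
      sub_eq_zero] at h
    rw [inner_smul_left, Complex.conj_conj, h]
  obtain ⟨hvT, hTv⟩ := hT.exists_mem_domain_of_inner hv'
  have h := hb ⟨v, hvT⟩
  rw [← hT.norm_subSMul_conj, subSMul_apply, hTv, sub_self, norm_zero] at h
  exact norm_le_zero_iff.mp (nonpos_of_mul_nonpos_right h hδ)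

theorem isClosed_range_subSMul (hT : IsSelfAdjoint T) (hδ : 0 < δ)
    (hb : ∀ x : T.domain, δ * ‖(x : H)‖ ≤ ‖T.subSMul z x‖) :
    IsClosed (LinearMap.range (T.subSMul z) : Set H) := by
  refine isClosed_of_closure_subset fun y hy => ?_
  obtain ⟨ys, hys, hlim⟩ := mem_closure_iff_seq_limit.mp hy
  choose u hu using hys
  have hcauchy : CauchySeq fun k => (u k : H) := by
    refine Metric.cauchySeq_iff.mpr fun ε hε => ?_
    obtain ⟨K, hK⟩ := Metric.cauchySeq_iff.mp hlim.cauchySeq (δ * ε) (by positivity)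
    refine ⟨K, fun j hj k hk => ?_⟩
    have h := hb (u j - u k)
    rw [_root_.map_sub, hu, hu, ← dist_eq_norm] at h
    rw [dist_eq_norm]
    exact lt_of_mul_lt_mul_left (h.trans_lt (hK j hj k hk)) hδ.le
  obtain ⟨x, hx⟩ := cauchySeq_tendsto_of_complete hcauchy
  have hgraph : (x, y + z • x) ∈ T.graph := by
    refine hT.isClosed.mem_of_tendsto (hx.prodMk_nhds (hlim.add (hx.const_smul z)))
      (Eventually.of_forall fun k => T.mem_graph_iff.mpr ⟨u k, rfl, ?_⟩)
    rw [← hu k, subSMul_apply, sub_add_cancel]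
  obtain ⟨x', hx', hTx'⟩ := T.mem_graph_iff.mp hgraph
  exact ⟨x', by rw [subSMul_apply, hTx', hx', add_sub_cancel_right]⟩

theorem mem_pmResolventSet (hT : IsSelfAdjoint T) (hδ : 0 < δ)
    (hb : ∀ x : T.domain, δ * ‖(x : H)‖ ≤ ‖T.subSMul z x‖) : z ∈ pmResolventSet T := by
  have hinj : Function.Injective (T.subSMul z) :=
    (injective_iff_map_eq_zero _).mpr fun x hx => by
      have h := hb x
      rw [hx, norm_zero] at h
      exact Subtype.ext (norm_le_zero_iff.mp (nonpos_of_mul_nonpos_right h hδ))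
  have hsurj : Function.Surjective (T.subSMul z) := by
    rw [← LinearMap.range_eq_top,
      ← (hT.isClosed_range_subSMul hδ hb).submodule_topologicalClosure_eq,
      Submodule.topologicalClosure_eq_top_iff]
    exact hT.orthogonal_range_subSMul_eq_bot hδ hb
  let e := LinearEquiv.ofBijective _ ⟨hinj, hsurj⟩
  let R : H →L[ℂ] H := LinearMap.mkContinuous (T.domain.subtype ∘ₗ e.symm.toLinearMap) δ⁻¹
    fun y => by
      rw [le_inv_mul_iff₀ hδ]
      exact (hb (e.symm y)).trans_eq (congrArg norm (e.apply_symm_apply y))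
  exact ⟨R, fun y => ⟨(e.symm y).2, e.apply_symm_apply y⟩,
    fun x => congrArg Subtype.val (e.symm_apply_apply x)⟩

end IsSelfAdjoint

section Galerkin

variable {E : Type*} [NormedAddCommGroup E] [InnerProductSpace ℂ E]
  {s : E →ₗ[ℂ] E →ₗ⋆[ℂ] ℂ} {D : Submodule ℂ E}

theorem re_apply_sub_le_of_galerkin (hherm : ∀ φ ∈ D, ∀ ψ ∈ D, s ψ φ = conj (s φ ψ))
    (hpos : ∀ φ ∈ D, 0 ≤ (s φ φ).re) {V : Submodule ℂ E} (hV : V ≤ D) {x ξ p : E}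
    (hx : x ∈ D) (hξ : ξ ∈ V) (hp : p ∈ V) (horth : ∀ e ∈ V, s (x - ξ) e = 0) :
    (s (x - ξ) (x - ξ)).re ≤ (s (x - p) (x - p)).re := by
  have he : ξ - p ∈ V := V.sub_mem hξ hp
  have hsplit : s (x - p) (x - p) = s (x - ξ) (x - ξ) + s (ξ - p) (ξ - p) := by
    rw [show x - p = (x - ξ) + (ξ - p) by abel]
    simp only [map_add, LinearMap.add_apply]
    rw [horth _ he, hherm _ (D.sub_mem hx (hV hξ)) _ (hV he), horth _ he, map_zero]
    ring
  rw [hsplit, Complex.add_re]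
  linarith [hpos _ (hV he)]

theorem tendsto_of_galerkin (hherm : ∀ φ ∈ D, ∀ ψ ∈ D, s ψ φ = conj (s φ ψ))
    (hcoer : ∀ φ ∈ D, ‖φ‖ ^ 2 ≤ (s φ φ).re) {L : ℕ → Submodule ℂ E} (hL : ∀ n, L n ≤ D)
    {x : E} (hx : x ∈ D) {ξ p : ℕ → E} (hξ : ∀ n, ξ n ∈ L n)
    (horth : ∀ n, ∀ e ∈ L n, s (x - ξ n) e = 0) (hp : ∀ n, p n ∈ L n)
    (hpx : Tendsto (fun n => (s (x - p n) (x - p n)).re) atTop (𝓝 0)) :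
    Tendsto ξ atTop (𝓝 x) := by
  have hpos : ∀ φ ∈ D, 0 ≤ (s φ φ).re := fun φ hφ => (sq_nonneg _).trans (hcoer φ hφ)
  rw [tendsto_iff_norm_sub_tendsto_zero]
  refine squeeze_zero (fun _ => norm_nonneg _) (fun n => ?_)
    (by simpa only [Real.sqrt_zero] using hpx.sqrt)
  rw [norm_sub_rev, Real.le_sqrt (norm_nonneg _) (hpos _ (D.sub_mem hx (hL n (hp n))))]
  exact (hcoer _ (D.sub_mem hx (hL n (hξ n)))).trans
    (re_apply_sub_le_of_galerkin hherm hpos (hL n) hx (hξ n) (hp n) (horth n))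

theorem exists_tendsto_galerkin (hherm : ∀ φ ∈ D, ∀ ψ ∈ D, s ψ φ = conj (s φ ψ))
    (hcoer : ∀ φ ∈ D, ‖φ‖ ^ 2 ≤ (s φ φ).re) {L : ℕ → Submodule ℂ E} (hL : ∀ n, L n ≤ D)
    [∀ n, FiniteDimensional ℂ (L n)] (A : ∀ n, L n →ₗ[ℂ] L n)
    (hA : ∀ n (φ ψ : L n), ⟪(ψ : E), A n φ⟫ = s φ ψ) {x y : E} (hx : x ∈ D)
    (hxy : ∀ e ∈ D, s x e = ⟪e, y⟫)
    (happrox : ∃ p : ℕ → E, (∀ n, p n ∈ L n) ∧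
      Tendsto (fun n => (s (x - p n) (x - p n)).re) atTop (𝓝 0)) :
    ∃ ξ : ∀ n, L n, Tendsto (fun n => (ξ n : E)) atTop (𝓝 x) ∧
      ∀ n, A n (ξ n) = (L n).orthogonalProjectionOnto y := by
  have hinj : ∀ n, Function.Injective (A n) := fun n =>
    (injective_iff_map_eq_zero _).mpr fun φ hφ => by
      have h := hcoer φ (hL n φ.2)
      rw [← hA, hφ] at h
      simpa using h
  choose ξ hξ using fun n =>
    LinearMap.injective_iff_surjective.mp (hinj n) ((L n).orthogonalProjectionOnto y)
  obtain ⟨p, hp, hpx⟩ := happrox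
  refine ⟨ξ, tendsto_of_galerkin hherm hcoer hL hx (fun n => (ξ n).2) (fun n e he => ?_) hp hpx,
    hξ⟩
  have h := hA n (ξ n) ⟨e, he⟩
  rw [hξ, ← Submodule.coe_inner, Submodule.inner_orthogonalProjectionOnto_eq_of_mem_left] at h
  rw [map_sub, LinearMap.sub_apply, hxy e (hL n he), ← h, sub_self]

theorem norm_le_of_tendsto_galerkin {L : ℕ → Submodule ℂ E} [∀ n, (L n).HasOrthogonalProjection]
    (B : ∀ n, L n →ₗ[ℂ] L n) {x y : E} {c z : ℂ} {δ : ℝ} {ξ : ∀ n, L n}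
    (hξ : Tendsto (fun n => (ξ n : E)) atTop (𝓝 x))
    (hB : ∀ n, B n (ξ n) - c • ξ n = (L n).orthogonalProjectionOnto (y - c • x))
    (hreg : ∀ᶠ n in atTop, δ * ‖ξ n‖ ≤ ‖B n (ξ n) - z • ξ n‖) :
    δ * ‖x‖ ≤ ‖y - z • x‖ := by
  have hlim : Tendsto (fun n => y - z • x + (c - z) • ((ξ n : E) - x)) atTop (𝓝 (y - z • x)) := by
    simpa using tendsto_const_nhds.add ((hξ.sub_const x).const_smul (c - z))
  refine le_of_tendsto_of_tendsto (hξ.norm.const_mul δ) hlim.norm ?_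
  filter_upwards [hreg] with n hn
  have hproj : B n (ξ n) - z • ξ n =
      (L n).orthogonalProjectionOnto (y - z • x + (c - z) • ((ξ n : E) - x)) := by
    rw [show y - z • x + (c - z) • ((ξ n : E) - x) = (y - c • x) + (c - z) • (ξ n : E) by module,
      map_add, map_smul, ← hB, Submodule.orthogonalProjectionOnto_mem_subspace_eq_self]
    module
  exact hn.trans (hproj ▸ (L n).norm_orthogonalProjectionOnto_apply_le _)

end Galerkin

theorem stmt_0_general
    -- `T` is a semi-bounded self-adjoint operator with `m = min σ(T)`
    (T : H →ₗ.[ℂ] H) (hsa : IsSelfAdjoint T)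
    (m : ℝ)
    -- `t` is the closed sesquilinear form associated to `T` (linear in the first,
    -- conjugate-linear in the second argument), defined on `dt = Dom t`
    (dt : Submodule ℂ H) (t : H →ₗ[ℂ] H →ₗ⋆[ℂ] ℂ)
    (hdomt : T.domain ≤ dt)
    (therm : ∀ φ ∈ dt, ∀ ψ ∈ dt, t ψ φ = starRingEnd ℂ (t φ ψ))
    (hcomp : ∀ φ : T.domain, ∀ ψ ∈ dt, t φ ψ = ⟪ψ, T φ⟫)
    (hlb : ∀ φ ∈ dt, m * ‖φ‖ ^ 2 ≤ (t φ φ).re)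
    -- the square of the norm of `H_t`
    (tnormSq : H → ℝ)
    (htn : ∀ φ, tnormSq φ = (t φ φ).re - m * ‖φ‖ ^ 2 + ‖φ‖ ^ 2)
    -- `(L n)` is a sequence of finite-dimensional trial spaces in `Dom t`, dense in `H_t`
    (L : ℕ → Submodule ℂ H) (hL : ∀ n, L n ≤ dt)
    [∀ n, FiniteDimensional ℂ (L n)]
    (hLdense : ∀ φ ∈ dt, ∃ u : ℕ → H, (∀ n, u n ∈ L n) ∧
      Tendsto (fun n => tnormSq (φ - u n)) atTop (nhds 0))
    -- `T_n` is the compression of the form `t` to `L n`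
    (Tn : ∀ n, L n →ₗ[ℂ] L n)
    (hTn : ∀ n, ∀ φ ψ : L n, (⟪ψ, Tn n φ⟫ : ℂ) = t (φ : H) (ψ : H))
    -- `Γ` is a `T_n`-regular set
    (Γ : Set ℂ)
    (hreg : ∃ δ > 0, ∃ N : ℕ, ∀ z ∈ Γ, ∀ n ≥ N, ∀ φ : L n, δ * ‖φ‖ ≤ ‖Tn n φ - z • φ‖) :
    Γ ⊆ pmResolventSet T := by
  intro z hz
  obtain ⟨δ, hδ, N, hreg⟩ := hreg
  -- `c = m - 1` makes `s φ φ` the squared norm of `φ` in `H_t`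
  set c : ℂ := ((m - 1 : ℝ) : ℂ)
  set s : H →ₗ[ℂ] H →ₗ⋆[ℂ] ℂ := t - c • (innerₛₗ ℂ).flip
  have hs : ∀ φ ψ, s φ ψ = t φ ψ - c * ⟪ψ, φ⟫ := fun _ _ => rfl
  have hs_tnormSq : ∀ φ, (s φ φ).re = tnormSq φ := fun φ => by
    have hφ : (⟪φ, φ⟫).re = ‖φ‖ ^ 2 := inner_self_eq_norm_sq (𝕜 := ℂ) φ
    rw [hs, htn, Complex.sub_re, Complex.re_ofReal_mul, hφ]
    ring
  have hs_herm : ∀ φ ∈ dt, ∀ ψ ∈ dt, s ψ φ = conj (s φ ψ) := fun φ hφ ψ hψ => by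
    simp [hs, therm φ hφ ψ hψ, c]
  have hs_coer : ∀ φ ∈ dt, ‖φ‖ ^ 2 ≤ (s φ φ).re := fun φ hφ => by
    rw [hs_tnormSq, htn]
    linarith [hlb φ hφ]
  refine hsa.mem_pmResolventSet hδ fun x => ?_
  obtain ⟨ξ, hξx, hξ⟩ := exists_tendsto_galerkin hs_herm hs_coer hL
    (fun n => Tn n - c • LinearMap.id)
    (fun n φ ψ => by simp [hs, ← hTn n φ ψ, Submodule.coe_inner])
    (hdomt x.2) (y := T x - c • (x : H))
    (fun e he => by rw [hs, hcomp x e he, inner_sub_right, inner_smul_right])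
    (by simpa only [hs_tnormSq] using hLdense x (hdomt x.2))
  exact norm_le_of_tendsto_galerkin Tn hξx (fun n => by simpa using hξ n)
    ((eventually_ge_atTop N).mono fun n hn => hreg z hz n hn (ξ n))

/-- **The Galerkin method for a semi-bounded self-adjoint operator: regular sets.**
If `Γ` is a `T_n`-regular set, then `Γ ⊆ ρ(T)`. -/
theorem stmt_0
    -- `T` is a semi-bounded self-adjoint operator with `m = min σ(T)`
    (T : H →ₗ.[ℂ] H) (hsa : IsSelfAdjoint T)
    (m : ℝ) (hm : IsLeast {x : ℝ | (x : ℂ) ∈ pmSpectrum T} m)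
    -- `t` is the closed sesquilinear form associated to `T` (linear in the first,
    -- conjugate-linear in the second argument), defined on `dt = Dom t`
    (dt : Submodule ℂ H) (t : H →ₗ[ℂ] H →ₗ⋆[ℂ] ℂ)
    (hdomt : T.domain ≤ dt)
    (therm : ∀ φ ∈ dt, ∀ ψ ∈ dt, t ψ φ = starRingEnd ℂ (t φ ψ))
    (hcomp : ∀ φ : T.domain, ∀ ψ ∈ dt, t φ ψ = ⟪ψ, T φ⟫)
    (hlb : ∀ φ ∈ dt, m * ‖φ‖ ^ 2 ≤ (t φ φ).re)
    -- the square of the norm of `H_t`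
    (tnormSq : H → ℝ)
    (htn : ∀ φ, tnormSq φ = (t φ φ).re - m * ‖φ‖ ^ 2 + ‖φ‖ ^ 2)
    -- the form `t` is closed, i.e. `H_t` is complete
    (hclosed : ∀ u : ℕ → H, (∀ k, u k ∈ dt) →
      (∀ ε > 0, ∃ N, ∀ j ≥ N, ∀ k ≥ N, tnormSq (u j - u k) < ε) →
      ∃ φ ∈ dt, Tendsto (fun k => tnormSq (u k - φ)) atTop (nhds 0))
    -- `(L n)` is a sequence of finite-dimensional trial spaces in `Dom t`, dense in `H_t`
    (L : ℕ → Submodule ℂ H) (hL : ∀ n, L n ≤ dt)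
    [∀ n, FiniteDimensional ℂ (L n)]
    (hLdense : ∀ φ ∈ dt, ∃ u : ℕ → H, (∀ n, u n ∈ L n) ∧
      Tendsto (fun n => tnormSq (φ - u n)) atTop (nhds 0))
    -- `T_n` is the compression of the form `t` to `L n`
    (Tn : ∀ n, L n →ₗ[ℂ] L n)
    (hTn : ∀ n, ∀ φ ψ : L n, (⟪ψ, Tn n φ⟫ : ℂ) = t (φ : H) (ψ : H))
    -- `Γ` is a `T_n`-regular set
    (Γ : Set ℂ)
    (hreg : ∃ δ > 0, ∃ N : ℕ, ∀ z ∈ Γ, ∀ n ≥ N, ∀ φ : L n, δ * ‖φ‖ ≤ ‖Tn n φ - z • φ‖) :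
    Γ ⊆ pmResolventSet T :=
  stmt_0_general T hsa m dt t hdomt therm hcomp hlb tnormSq htn L hL hLdense Tn hTn Γ hreg
end
end

section
/- Let Γ ⊂ ℂ be a compact T_n-regular set. If Γ ⊆ ρ(T + A), then Γ is an S_n-regular set, i.e. there exist δ > 0 and N ∈ ℕ such that ‖(S_n − z)φ‖ ≥ δ‖φ‖ for all z ∈ Γ, all φ ∈ L_n and all n ≥ N. -/
/-!
Suppose not. Then there are unit vectors `φₖ ∈ L_{nₖ}`, `nₖ → ∞`, and `zₖ ∈ Γ` with
`‖(S_{nₖ} - zₖ)φₖ‖ → 0`. The relative form bound with `α < 1` makes `φₖ` bounded in `H_t`, so by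
`|T|^{1/2}`-compactness of `A` and compactness of `Γ` we may assume `Aφₖ → v` and `zₖ → z₀ ∈ Γ`.
Since `(T + A)^* = T + A^*`, every `h` is `(T + A^* - z̄₀)x` for `x = R(z₀)^* h`; testing the
Galerkin equations against approximations of `x` in `L_{nₖ}` gives `⟪h, φₖ⟫ → 0`. Hence
`⟪R(z₀)^* h, v⟫ = lim ⟪A^* R(z₀)^* h, φₖ⟫ = 0` for all `h`, so `v = 0`. But `S_n - T_n` is the
compression of `A` to `L_n`, so `δ ≤ ‖(T_{nₖ} - zₖ)φₖ‖ ≤ ‖(S_{nₖ} - zₖ)φₖ‖ + ‖Aφₖ‖ → 0`.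
-/

open scoped ComplexInnerProductSpace
open Filter Topology

noncomputable section

section

variable {H : Type*} [NormedAddCommGroup H] [InnerProductSpace ℂ H]

def tNormSq (t : H →ₗ[ℂ] H →ₗ⋆[ℂ] ℂ) (m : ℝ) (φ : H) : ℝ :=
  (t φ φ).re - m * ‖φ‖ ^ 2 + ‖φ‖ ^ 2

section ShiftedForm

variable {dt : Submodule ℂ H} {t : H →ₗ[ℂ] H →ₗ⋆[ℂ] ℂ} {m : ℝ}

lemma re_form_add_inner_self (u : H) :
    (t u u + ((1 - m : ℝ) : ℂ) * ⟪u, u⟫).re = tNormSq t m u := by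
  have hu := inner_self_eq_norm_sq (𝕜 := ℂ) u
  rw [RCLike.re_to_complex] at hu
  rw [Complex.add_re, Complex.re_ofReal_mul, hu, tNormSq]
  ring

lemma sq_norm_le_tNormSq (hlb : ∀ φ ∈ dt, m * ‖φ‖ ^ 2 ≤ (t φ φ).re) {u : H} (hu : u ∈ dt) :
    ‖u‖ ^ 2 ≤ tNormSq t m u := by
  unfold tNormSq; linarith [hlb u hu]

lemma norm_le_sqrt_tNormSq (hlb : ∀ φ ∈ dt, m * ‖φ‖ ^ 2 ≤ (t φ φ).re) {u : H} (hu : u ∈ dt) :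
    ‖u‖ ≤ √(tNormSq t m u) :=
  Real.le_sqrt_of_sq_le (sq_norm_le_tNormSq hlb hu)

-- Cauchy–Schwarz for `t` comes from reading `t + (1 - m)⟪·,·⟫` as a semi-inner product on `Dom t`.
variable (dt t m) in
abbrev shiftedFormCore (therm : ∀ φ ∈ dt, ∀ ψ ∈ dt, t ψ φ = starRingEnd ℂ (t φ ψ))
    (hlb : ∀ φ ∈ dt, m * ‖φ‖ ^ 2 ≤ (t φ φ).re) : PreInnerProductSpace.Core ℂ dt where
  inner x y := t y x + ((1 - m : ℝ) : ℂ) * ⟪(x : H), y⟫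
  conj_inner_symm x y := by
    simp only [map_add, map_mul, Complex.conj_ofReal, inner_conj_symm, ← therm x x.2 y y.2]
  re_inner_nonneg x := by
    rw [RCLike.re_to_complex, re_form_add_inner_self]
    exact (sq_nonneg _).trans (sq_norm_le_tNormSq hlb x.2)
  add_left x y z := by simp only [Submodule.coe_add, map_add, inner_add_left]; ring
  smul_left x y r := by
    simp only [Submodule.coe_smul, map_smulₛₗ, inner_smul_left, smul_eq_mul]; ring

lemma norm_form_le (therm : ∀ φ ∈ dt, ∀ ψ ∈ dt, t ψ φ = starRingEnd ℂ (t φ ψ))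
    (hlb : ∀ φ ∈ dt, m * ‖φ‖ ^ 2 ≤ (t φ φ).re) {u w : H} (hu : u ∈ dt) (hw : w ∈ dt) :
    ‖t u w‖ ≤ (1 + |1 - m|) * √(tNormSq t m u) * √(tNormSq t m w) := by
  have hcs : ‖t u w + ((1 - m : ℝ) : ℂ) * ⟪w, u⟫‖ ≤ √(tNormSq t m w) * √(tNormSq t m u) := by
    have := @InnerProductSpace.Core.norm_inner_le_norm ℂ dt _ _ _
      (shiftedFormCore dt t m therm hlb) ⟨w, hw⟩ ⟨u, hu⟩
    rwa [← re_form_add_inner_self, ← re_form_add_inner_self, ← RCLike.re_to_complex,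
      ← RCLike.re_to_complex]
  have hinner :
      ‖((1 - m : ℝ) : ℂ) * ⟪w, u⟫‖ ≤ |1 - m| * (√(tNormSq t m w) * √(tNormSq t m u)) := by
    rw [norm_mul, Complex.norm_real, Real.norm_eq_abs]
    exact mul_le_mul_of_nonneg_left ((norm_inner_le_norm w u).trans (mul_le_mul
      (norm_le_sqrt_tNormSq hlb hw) (norm_le_sqrt_tNormSq hlb hu) (norm_nonneg _)
      (Real.sqrt_nonneg _))) (abs_nonneg _)
  calc ‖t u w‖ ≤ ‖t u w + ((1 - m : ℝ) : ℂ) * ⟪w, u⟫‖ + ‖((1 - m : ℝ) : ℂ) * ⟪w, u⟫‖ :=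
        norm_le_add_norm_add _ _
    _ ≤ (1 + |1 - m|) * √(tNormSq t m u) * √(tNormSq t m w) := by nlinarith

lemma norm_form_residual_le (therm : ∀ φ ∈ dt, ∀ ψ ∈ dt, t ψ φ = starRingEnd ℂ (t φ ψ))
    (hlb : ∀ φ ∈ dt, m * ‖φ‖ ^ 2 ≤ (t φ φ).re) {u y a : H} {z : ℂ} {C B : ℝ} (hu : u ∈ dt)
    (huC : tNormSq t m u ≤ C) (ha : ‖a‖ ≤ B) (hy : y ∈ dt) :
    ‖t u y + ⟪y, a⟫ - z * ⟪y, u⟫‖ ≤ ((1 + |1 - m|) * √C + B + ‖z‖ * √C) * √(tNormSq t m y) := by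
  have hu' : ‖u‖ ≤ √C := (norm_le_sqrt_tNormSq hlb hu).trans (Real.sqrt_le_sqrt huC)
  have hy' := norm_le_sqrt_tNormSq hlb hy
  have hform : ‖t u y‖ ≤ (1 + |1 - m|) * √C * √(tNormSq t m y) :=
    (norm_form_le therm hlb hu hy).trans (by gcongr)
  have hya : ‖⟪y, a⟫‖ ≤ √(tNormSq t m y) * B :=
    (norm_inner_le_norm _ _).trans (mul_le_mul hy' ha (norm_nonneg _) (Real.sqrt_nonneg _))
  have hyu : ‖z * ⟪y, u⟫‖ ≤ ‖z‖ * (√(tNormSq t m y) * √C) := by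
    rw [norm_mul]
    gcongr
    exact (norm_inner_le_norm _ _).trans (mul_le_mul hy' hu' (norm_nonneg _) (Real.sqrt_nonneg _))
  calc ‖t u y + ⟪y, a⟫ - z * ⟪y, u⟫‖ ≤ ‖t u y‖ + ‖⟪y, a⟫‖ + ‖z * ⟪y, u⟫‖ :=
        norm_sub_le_of_le (norm_add_le _ _) le_rfl
    _ ≤ _ := by linarith

lemma tendsto_form_residual_zero (therm : ∀ φ ∈ dt, ∀ ψ ∈ dt, t ψ φ = starRingEnd ℂ (t φ ψ))
    (hlb : ∀ φ ∈ dt, m * ‖φ‖ ^ 2 ≤ (t φ φ).re) {u a r w : ℕ → H} {z : ℕ → ℂ} {z₀ : ℂ} {x : H}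
    {C B : ℝ} (hu : ∀ k, u k ∈ dt) (huC : ∀ k, tNormSq t m (u k) ≤ C) (ha : ∀ k, ‖a k‖ ≤ B)
    (hz : Tendsto z atTop (𝓝 z₀)) (hr : Tendsto r atTop (𝓝 0)) (hx : x ∈ dt)
    (hw : ∀ k, w k ∈ dt) (hwx : Tendsto (fun k => tNormSq t m (x - w k)) atTop (𝓝 0))
    (hgal : ∀ k, ⟪w k, r k⟫ = t (u k) (w k) + ⟪w k, a k⟫ - z k * ⟪w k, u k⟫) :
    Tendsto (fun k => t (u k) x + ⟪x, a k⟫ - z₀ * ⟪x, u k⟫) atTop (𝓝 0) := by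
  have hsqrt : Tendsto (fun k => √(tNormSq t m (x - w k))) atTop (𝓝 0) := by
    simpa using hwx.sqrt
  have hwx' : Tendsto w atTop (𝓝 x) := by
    rw [tendsto_iff_norm_sub_tendsto_zero]
    refine squeeze_zero (fun _ => norm_nonneg _) (fun k => ?_) hsqrt
    rw [norm_sub_rev]
    exact norm_le_sqrt_tNormSq hlb (dt.sub_mem hx (hw k))
  have hdec : ∀ k, t (u k) x + ⟪x, a k⟫ - z₀ * ⟪x, u k⟫ = ⟪w k, r k⟫ + (z k - z₀) * ⟪w k, u k⟫
      + (t (u k) (x - w k) + ⟪x - w k, a k⟫ - z₀ * ⟪x - w k, u k⟫) := by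
    intro k
    rw [hgal, map_sub, inner_sub_left, inner_sub_left]
    ring
  have hubdd (k : ℕ) : ‖u k‖ ≤ √C :=
    (norm_le_sqrt_tNormSq hlb (hu k)).trans (Real.sqrt_le_sqrt (huC k))
  have hres : Tendsto (fun k => ⟪w k, r k⟫) atTop (𝓝 0) := by simpa using hwx'.inner hr
  have hshift : Tendsto (fun k => (z k - z₀) * ⟪w k, u k⟫) atTop (𝓝 0) := by
    refine squeeze_zero_norm (fun k => ?_) (by simpa using
      ((tendsto_iff_norm_sub_tendsto_zero.mp hz).mul (hwx'.norm.mul_const √C)))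
    rw [norm_mul]
    gcongr
    exact (norm_inner_le_norm _ _).trans (by gcongr; exact hubdd k)
  have happrox : Tendsto (fun k => t (u k) (x - w k) + ⟪x - w k, a k⟫ - z₀ * ⟪x - w k, u k⟫)
      atTop (𝓝 0) :=
    squeeze_zero_norm (fun k => norm_form_residual_le therm hlb (hu k) (huC k) (ha k)
      (dt.sub_mem hx (hw k))) (by simpa using hsqrt.const_mul _)
  simpa only [hdec, add_zero] using (hres.add hshift).add happrox

end ShiftedForm

lemma re_le_of_norm_add_sub_le {a b z : ℂ} {α β ρ M : ℝ} (hα : α < 1) (h : ‖a + b - z‖ ≤ ρ)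
    (hb : ‖b‖ ≤ α * a.re + β) (hz : ‖z‖ ≤ M) : a.re ≤ (ρ + M + β) / (1 - α) := by
  rw [le_div_iff₀ (by linarith)]
  have hre : (a + b - z).re ≤ ρ := (Complex.re_le_norm _).trans h
  rw [Complex.sub_re, Complex.add_re] at hre
  nlinarith [neg_abs_le b.re, Complex.abs_re_le_norm b, Complex.re_le_norm z]

lemma exists_approx_eigen_of_not_regular {E : ℕ → Type*} [∀ n, NormedAddCommGroup (E n)]
    [∀ n, NormedSpace ℂ (E n)] (S : ∀ n, E n →ₗ[ℂ] E n) {Γ : Set ℂ}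
    (h : ¬ ∃ δ > 0, ∃ N : ℕ, ∀ z ∈ Γ, ∀ n ≥ N, ∀ φ : E n, δ * ‖φ‖ ≤ ‖S n φ - z • φ‖) (k : ℕ) :
    ∃ n ≥ k, ∃ z ∈ Γ, ∃ φ : E n, ‖φ‖ = 1 ∧ ‖S n φ - z • φ‖ ≤ 1 / (k + 1) := by
  push Not at h
  obtain ⟨z, hz, n, hn, φ, hφ⟩ := h (1 / (k + 1)) (by positivity) k
  have hφ0 : φ ≠ 0 := by rintro rfl; simp at hφ
  refine ⟨n, hn, z, hz, (‖φ‖ : ℂ)⁻¹ • φ, norm_smul_inv_norm hφ0, ?_⟩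
  rw [map_smul, smul_comm, ← smul_sub, norm_smul, norm_inv, Complex.norm_real, norm_norm,
    inv_mul_le_iff₀ (norm_pos_iff.mpr hφ0), mul_comm]
  exact hφ.le

lemma norm_le_of_inner_eq {K : Submodule ℂ H} {w : K} {a : H}
    (h : ∀ ψ : K, ⟪(ψ : H), w⟫ = ⟪(ψ : H), a⟫) : ‖w‖ ≤ ‖a‖ := by
  rcases (norm_nonneg w).eq_or_lt with hw | hw
  · exact hw ▸ norm_nonneg a
  refine le_of_mul_le_mul_left ?_ hw
  calc ‖w‖ * ‖w‖ = RCLike.re ⟪(w : H), w⟫ := (inner_self_eq_norm_mul_norm _).symm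
    _ = RCLike.re ⟪(w : H), a⟫ := by rw [h]
    _ ≤ ‖w‖ * ‖a‖ := (RCLike.re_le_norm _).trans (norm_inner_le_norm _ _)

section Galerkin

variable {dt : Submodule ℂ H} {t : H →ₗ[ℂ] H →ₗ⋆[ℂ] ℂ} {A : H →ₗ.[ℂ] H} (hdomA : dt ≤ A.domain)
  {L : ℕ → Submodule ℂ H} (hL : ∀ n, L n ≤ dt) {Sn Tn : ∀ n, L n →ₗ[ℂ] L n}

lemma inner_galerkin_residual (hSn : ∀ n, ∀ φ ψ : L n, (⟪ψ, Sn n φ⟫ : ℂ) =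
      t (φ : H) (ψ : H) + ⟪(ψ : H), A ⟨(φ : H), hdomA (hL n φ.2)⟩⟫)
    {n : ℕ} (φ ψ : L n) (z : ℂ) :
    ⟪(ψ : H), ((Sn n φ - z • φ : L n) : H)⟫ =
      t φ ψ + ⟪(ψ : H), A ⟨φ, hdomA (hL n φ.2)⟩⟫ - z * ⟪(ψ : H), φ⟫ := by
  rw [← Submodule.coe_inner, inner_sub_right, inner_smul_right, hSn, Submodule.coe_inner]

lemma tNormSq_le_of_approx_eigen {m α β ρ M : ℝ} (hα : α < 1)
    (hbound : ∀ φ (hφ : φ ∈ dt), ‖(⟪φ, A ⟨φ, hdomA hφ⟩⟫ : ℂ)‖ ≤ α * (t φ φ).re + β * ‖φ‖ ^ 2)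
    (hSn : ∀ n, ∀ φ ψ : L n, (⟪ψ, Sn n φ⟫ : ℂ) =
      t (φ : H) (ψ : H) + ⟪(ψ : H), A ⟨(φ : H), hdomA (hL n φ.2)⟩⟫)
    {n : ℕ} {φ : L n} (hφ : ‖φ‖ = 1) {z : ℂ} (hz : ‖z‖ ≤ M) (hres : ‖Sn n φ - z • φ‖ ≤ ρ) :
    tNormSq t m φ ≤ (ρ + M + β) / (1 - α) - m + 1 := by
  have hφ' : ‖(φ : H)‖ = 1 := hφ
  have hquad : ‖t φ φ + ⟪(φ : H), A ⟨φ, hdomA (hL n φ.2)⟩⟫ - z‖ ≤ ρ := by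
    have hself : ⟪(φ : H), (φ : H)⟫ = 1 := by simp [inner_self_eq_norm_sq_to_K, hφ']
    rw [← mul_one z, ← hself, ← inner_galerkin_residual hdomA hL hSn]
    refine (norm_inner_le_norm _ _).trans ?_
    rw [hφ', one_mul]
    exact hres
  have hre := re_le_of_norm_add_sub_le hα hquad (by simpa [hφ'] using hbound φ (hL n φ.2)) hz
  rw [tNormSq, hφ']
  linarith

lemma le_norm_galerkin_add_norm {δ : ℝ}
    (hTn : ∀ n, ∀ φ ψ : L n, (⟪ψ, Tn n φ⟫ : ℂ) = t (φ : H) (ψ : H))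
    (hSn : ∀ n, ∀ φ ψ : L n, (⟪ψ, Sn n φ⟫ : ℂ) =
      t (φ : H) (ψ : H) + ⟪(ψ : H), A ⟨(φ : H), hdomA (hL n φ.2)⟩⟫)
    {n : ℕ} {φ : L n} (hφ : ‖φ‖ = 1) {z : ℂ} (hreg : δ * ‖φ‖ ≤ ‖Tn n φ - z • φ‖) :
    δ ≤ ‖Sn n φ - z • φ‖ + ‖A ⟨φ, hdomA (hL n φ.2)⟩‖ := by
  have hcompress : ‖Sn n φ - Tn n φ‖ ≤ ‖A ⟨φ, hdomA (hL n φ.2)⟩‖ :=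
    norm_le_of_inner_eq fun ψ => by
      rw [← Submodule.coe_inner, inner_sub_right, hSn, hTn, add_sub_cancel_left]
  rw [hφ, mul_one] at hreg
  calc δ ≤ ‖Tn n φ - z • φ‖ := hreg
    _ = ‖(Sn n φ - z • φ) - (Sn n φ - Tn n φ)‖ := by rw [sub_sub_sub_cancel_left]
    _ ≤ _ := (norm_sub_le _ _).trans (by gcongr)

end Galerkin

end

variable {H : Type*} [NormedAddCommGroup H] [InnerProductSpace ℂ H] [CompleteSpace H]

lemma exists_mem_adjoint_domain_of_resolvent {S : H →ₗ.[ℂ] H} (hS : Dense (S.domain : Set H))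
    {z : ℂ} {R : H →L[ℂ] H} (hR : ∀ x : S.domain, R (S x - z • (x : H)) = x) (h : H) :
    ∃ hx : R.adjoint h ∈ S.adjoint.domain,
      S.adjoint ⟨R.adjoint h, hx⟩ = h + starRingEnd ℂ z • R.adjoint h := by
  have hinner (u : S.domain) : ⟪h + starRingEnd ℂ z • R.adjoint h, u⟫ = ⟪R.adjoint h, S u⟫ := by
    calc ⟪h + starRingEnd ℂ z • R.adjoint h, u⟫
        = ⟪h, R (S u - z • (u : H))⟫ + z * ⟪R.adjoint h, u⟫ := by
          rw [hR, inner_add_left, inner_smul_left, Complex.conj_conj]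
      _ = ⟪R.adjoint h, S u⟫ := by
          rw [← R.adjoint_inner_left, inner_sub_right, inner_smul_right]
          ring
  have hmem := LinearPMap.mem_adjoint_domain_of_exists _ ⟨_, hinner⟩
  exact ⟨hmem, LinearPMap.adjoint_apply_eq hS ⟨_, hmem⟩ hinner⟩

lemma eq_zero_of_tendsto_apply_of_weak {A S : H →ₗ.[ℂ] H} (hA : Dense (A.domain : Set H)) {z : ℂ}
    {R : H →L[ℂ] H} (hR : ∀ y, ∃ hy : R y ∈ S.domain, S ⟨R y, hy⟩ - z • R y = y)
    (hRA : ∀ h, R.adjoint h ∈ A.adjoint.domain) {u : ℕ → A.domain}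
    (hweak : ∀ h, Tendsto (fun k => ⟪h, (u k : H)⟫) atTop (𝓝 0)) {v : H}
    (hv : Tendsto (fun k => A (u k)) atTop (𝓝 v)) : v = 0 := by
  have hRv : R v = 0 := by
    refine ext_inner_left ℂ fun h => ?_
    rw [inner_zero_right, ← R.adjoint_inner_left]
    refine tendsto_nhds_unique (tendsto_const_nhds.inner hv) ?_
    simpa only [← LinearPMap.adjoint_isFormalAdjoint hA ⟨_, hRA h⟩] using hweak _
  obtain ⟨hy, hSv⟩ := hR v
  have h0 : (⟨R v, hy⟩ : S.domain) = 0 := Subtype.ext hRv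
  rw [h0, LinearPMap.map_zero, hRv, smul_zero, sub_zero] at hSv
  exact hSv.symm

lemma exists_adjoint_resolvent_add {T A : H →ₗ.[ℂ] H} (hT : Dense (T.domain : Set H))
    (hTA : T.domain ≤ A.domain) (hTAadj : (T + A).adjoint = T + A.adjoint) {z : ℂ}
    {R : H →L[ℂ] H} (hR : ∀ x : (T + A).domain, R ((T + A) x - z • (x : H)) = x) (h : H) :
    ∃ (hxT : R.adjoint h ∈ T.domain) (hxA : R.adjoint h ∈ A.adjoint.domain),
      T ⟨R.adjoint h, hxT⟩ + A.adjoint ⟨R.adjoint h, hxA⟩ = h + starRingEnd ℂ z • R.adjoint h := by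
  have hdense : Dense ((T + A).domain : Set H) := by
    rwa [LinearPMap.add_domain, inf_eq_left.mpr hTA]
  have key := exists_mem_adjoint_domain_of_resolvent hdense hR h
  rw [hTAadj] at key
  obtain ⟨⟨hxT, hxA⟩, hx⟩ := key
  exact ⟨hxT, hxA, hx⟩

lemma inner_eq_form_of_adjoint {T A : H →ₗ.[ℂ] H} {dt : Submodule ℂ H}
    {t : H →ₗ[ℂ] H →ₗ⋆[ℂ] ℂ} (hdomt : T.domain ≤ dt) (hdomA : dt ≤ A.domain)
    (hA : Dense (A.domain : Set H)) (therm : ∀ φ ∈ dt, ∀ ψ ∈ dt, t ψ φ = starRingEnd ℂ (t φ ψ))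
    (hcomp : ∀ φ : T.domain, ∀ ψ ∈ dt, t φ ψ = ⟪ψ, T φ⟫) {x h : H} {z : ℂ}
    (hxT : x ∈ T.domain) (hxA : x ∈ A.adjoint.domain)
    (hx : T ⟨x, hxT⟩ + A.adjoint ⟨x, hxA⟩ = h + starRingEnd ℂ z • x) {u : H} (hu : u ∈ dt) :
    ⟪h, u⟫ = t u x + ⟪x, A ⟨u, hdomA hu⟩⟫ - z * ⟪x, u⟫ := by
  rw [therm x (hdomt hxT) u hu, hcomp ⟨x, hxT⟩ u hu, inner_conj_symm,
    ← LinearPMap.adjoint_isFormalAdjoint hA ⟨x, hxA⟩ ⟨u, hdomA hu⟩, ← inner_add_left, hx,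
    inner_add_left, inner_smul_left, Complex.conj_conj]
  ring

lemma tendsto_inner_zero_of_approx_eigen {T A : H →ₗ.[ℂ] H} {dt : Submodule ℂ H}
    {t : H →ₗ[ℂ] H →ₗ⋆[ℂ] ℂ} {m : ℝ} (hdomt : T.domain ≤ dt)
    (therm : ∀ φ ∈ dt, ∀ ψ ∈ dt, t ψ φ = starRingEnd ℂ (t φ ψ))
    (hcomp : ∀ φ : T.domain, ∀ ψ ∈ dt, t φ ψ = ⟪ψ, T φ⟫)
    (hlb : ∀ φ ∈ dt, m * ‖φ‖ ^ 2 ≤ (t φ φ).re) (hdomA : dt ≤ A.domain)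
    (hA : Dense (A.domain : Set H)) {L : ℕ → Submodule ℂ H} (hL : ∀ n, L n ≤ dt)
    (hLdense : ∀ φ ∈ dt, ∃ u : ℕ → H, (∀ n, u n ∈ L n) ∧
      Tendsto (fun n => tNormSq t m (φ - u n)) atTop (𝓝 0))
    {Sn : ∀ n, L n →ₗ[ℂ] L n} (hSn : ∀ n, ∀ φ ψ : L n, (⟪ψ, Sn n φ⟫ : ℂ) =
      t (φ : H) (ψ : H) + ⟪(ψ : H), A ⟨(φ : H), hdomA (hL n φ.2)⟩⟫) {z₀ : ℂ}
    (hadj : ∀ h, ∃ x, ∃ (hxT : x ∈ T.domain) (hxA : x ∈ A.adjoint.domain),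
      T ⟨x, hxT⟩ + A.adjoint ⟨x, hxA⟩ = h + starRingEnd ℂ z₀ • x)
    {n : ℕ → ℕ} (hn : Tendsto n atTop atTop) {φ : ∀ k, L (n k)} {z : ℕ → ℂ}
    (hz : Tendsto z atTop (𝓝 z₀)) {C B : ℝ} (hC : ∀ k, tNormSq t m (φ k) ≤ C)
    (hB : ∀ k, ‖A ⟨φ k, hdomA (hL _ (φ k).2)⟩‖ ≤ B)
    (hres : Tendsto (fun k => ((Sn (n k) (φ k) - z k • φ k : L (n k)) : H)) atTop (𝓝 0))
    (h : H) : Tendsto (fun k => ⟪h, (φ k : H)⟫) atTop (𝓝 0) := by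
  obtain ⟨x, hxT, hxA, hx⟩ := hadj h
  obtain ⟨w, hwL, hw⟩ := hLdense x (hdomt hxT)
  refine (tendsto_form_residual_zero therm hlb (fun k => hL _ (φ k).2) hC hB hz hres (hdomt hxT)
    (fun k => hL _ (hwL (n k))) (hw.comp hn)
    (fun k => inner_galerkin_residual hdomA hL hSn (φ k) ⟨w (n k), hwL (n k)⟩ (z k))).congr
    fun k => ?_
  exact (inner_eq_form_of_adjoint hdomt hdomA hA therm hcomp hxT hxA hx (hL _ (φ k).2)).symm

theorem stmt_2_general
    -- `T` is a semi-bounded self-adjoint operator with `m = min σ(T)`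
    (T : H →ₗ.[ℂ] H) (hsa : IsSelfAdjoint T)
    (m : ℝ)
    -- `t` is the closed sesquilinear form associated to `T`
    (dt : Submodule ℂ H) (t : H →ₗ[ℂ] H →ₗ⋆[ℂ] ℂ)
    (hdomt : T.domain ≤ dt)
    (therm : ∀ φ ∈ dt, ∀ ψ ∈ dt, t ψ φ = starRingEnd ℂ (t φ ψ))
    (hcomp : ∀ φ : T.domain, ∀ ψ ∈ dt, t φ ψ = ⟪ψ, T φ⟫)
    (hlb : ∀ φ ∈ dt, m * ‖φ‖ ^ 2 ≤ (t φ φ).re)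
    (tnormSq : H → ℝ)
    (htn : ∀ φ, tnormSq φ = (t φ φ).re - m * ‖φ‖ ^ 2 + ‖φ‖ ^ 2)
    -- `A` is a closed `|T|^(1/2)`-compact operator defined (at least) on `Dom t`
    (A : H →ₗ.[ℂ] H) (hdomA : dt ≤ A.domain)
    (hAcpt : ∀ (u : ℕ → H) (hu : ∀ k, u k ∈ dt), (∃ C, ∀ k, tnormSq (u k) ≤ C) →
      ∃ (g : ℕ → ℕ) (v : H), StrictMono g ∧
        Tendsto (fun k => A ⟨u (g k), hdomA (hu (g k))⟩) atTop (nhds v))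
    -- `(T+A)* = T + A*`
    (hTAadj : (T + A).adjoint = T + A.adjoint)
    -- the relative form bound `|⟨Aφ,φ⟩| ≤ α t[φ] + β ‖φ‖²`
    (α β : ℝ) (hα1 : α < 1)
    (hbound : ∀ φ (hφ : φ ∈ dt), ‖(⟪φ, A ⟨φ, hdomA hφ⟩⟫ : ℂ)‖ ≤ α * (t φ φ).re + β * ‖φ‖ ^ 2)
    -- trial spaces
    (L : ℕ → Submodule ℂ H) (hL : ∀ n, L n ≤ dt)
    (hLdense : ∀ φ ∈ dt, ∃ u : ℕ → H, (∀ n, u n ∈ L n) ∧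
      Tendsto (fun n => tnormSq (φ - u n)) atTop (nhds 0))
    -- compressions `T_n` of the form `t` and `S_n` of the form `s = t + ⟨A·,·⟩`
    (Tn Sn : ∀ n, L n →ₗ[ℂ] L n)
    (hTn : ∀ n, ∀ φ ψ : L n, (⟪ψ, Tn n φ⟫ : ℂ) = t (φ : H) (ψ : H))
    (hSn : ∀ n, ∀ φ ψ : L n, (⟪ψ, Sn n φ⟫ : ℂ) =
      t (φ : H) (ψ : H) + ⟪(ψ : H), A ⟨(φ : H), hdomA (hL n φ.2)⟩⟫)
    -- `Γ` is a compact `T_n`-regular subset of `ρ(T+A)`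
    (Γ : Set ℂ) (hΓcpt : IsCompact Γ)
    (hreg : ∃ δ > 0, ∃ N : ℕ, ∀ z ∈ Γ, ∀ n ≥ N, ∀ φ : L n, δ * ‖φ‖ ≤ ‖Tn n φ - z • φ‖)
    (hΓres : Γ ⊆ pmResolventSet (T + A)) :
    ∃ δ > 0, ∃ N : ℕ, ∀ z ∈ Γ, ∀ n ≥ N, ∀ φ : L n, δ * ‖φ‖ ≤ ‖Sn n φ - z • φ‖ := by
  obtain ⟨δ, hδ, N, hTreg⟩ := hreg
  obtain rfl : tnormSq = tNormSq t m := funext htn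
  by_contra hnot
  choose n hn z hz φ hφ hres using exists_approx_eigen_of_not_regular Sn hnot
  obtain ⟨M, hM⟩ := hΓcpt.isBounded.exists_norm_le
  have hC (k : ℕ) : tNormSq t m (φ k) ≤ (1 + M + β) / (1 - α) - m + 1 :=
    tNormSq_le_of_approx_eigen hdomA hL hα1 hbound hSn (hφ k) (hM _ (hz k))
      ((hres k).trans (div_le_one_of_le₀ (by linarith [k.cast_nonneg (α := ℝ)]) (by positivity)))
  obtain ⟨g, v, hg, hAv⟩ := hAcpt (fun k => φ k) (fun k => hL _ (φ k).2) ⟨_, hC⟩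
  obtain ⟨z₀, hz₀, g', hg', hzlim⟩ := hΓcpt.tendsto_subseq fun k => hz (g k)
  obtain ⟨R, hR, hR'⟩ := hΓres hz₀
  have hG : Tendsto (g ∘ g') atTop atTop := (hg.comp hg').tendsto_atTop
  have hnG : Tendsto (fun k => n (g (g' k))) atTop atTop := tendsto_atTop_mono (fun k => hn _) hG
  have hres0 :
      Tendsto (fun k => ‖Sn _ (φ (g (g' k))) - z (g (g' k)) • φ (g (g' k))‖) atTop (𝓝 0) :=
    squeeze_zero (fun _ => norm_nonneg _) (fun k => hres _)
      (tendsto_one_div_add_atTop_nhds_zero_nat.comp hG)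
  have hAv' := hAv.comp hg'.tendsto_atTop
  obtain ⟨B, hB⟩ := (Metric.isBounded_range_of_tendsto _ hAv').exists_norm_le
  have hA : Dense (A.domain : Set H) := hsa.dense_domain.mono (hdomt.trans hdomA)
  have hadj := exists_adjoint_resolvent_add hsa.dense_domain (hdomt.trans hdomA) hTAadj hR'
  have hweak := tendsto_inner_zero_of_approx_eigen hdomt therm hcomp hlb hdomA hA hL hLdense hSn
    (fun h => ⟨_, hadj h⟩) hnG (φ := fun k => φ (g (g' k))) hzlim (fun k => hC _)
    (fun k => hB _ ⟨k, rfl⟩) (tendsto_zero_iff_norm_tendsto_zero.mpr hres0)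
  have hv : v = 0 := eq_zero_of_tendsto_apply_of_weak hA hR (fun h => (hadj h).snd.fst)
    (u := fun k => ⟨φ (g (g' k)), hdomA (hL _ (φ (g (g' k))).2)⟩) hweak hAv'
  have hlim := hres0.add hAv'.norm
  rw [hv, norm_zero, add_zero] at hlim
  refine hδ.not_ge (ge_of_tendsto hlim ?_)
  filter_upwards [hnG.eventually_ge_atTop N] with k hk
  exact le_norm_galerkin_add_norm hdomA hL hTn hSn (hφ _) (hTreg _ (hz _) _ hk _)

/-- **Theorem (resolvent bound).** If a compact set `Γ` is `T_n`-regular and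
`Γ ⊆ ρ(T+A)`, then `Γ` is `S_n`-regular. -/
theorem stmt_2
    -- `T` is a semi-bounded self-adjoint operator with `m = min σ(T)`
    (T : H →ₗ.[ℂ] H) (hsa : IsSelfAdjoint T)
    (m : ℝ) (hm : IsLeast {x : ℝ | (x : ℂ) ∈ pmSpectrum T} m)
    -- `t` is the closed sesquilinear form associated to `T`
    (dt : Submodule ℂ H) (t : H →ₗ[ℂ] H →ₗ⋆[ℂ] ℂ)
    (hdomt : T.domain ≤ dt)
    (therm : ∀ φ ∈ dt, ∀ ψ ∈ dt, t ψ φ = starRingEnd ℂ (t φ ψ))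
    (hcomp : ∀ φ : T.domain, ∀ ψ ∈ dt, t φ ψ = ⟪ψ, T φ⟫)
    (hlb : ∀ φ ∈ dt, m * ‖φ‖ ^ 2 ≤ (t φ φ).re)
    (tnormSq : H → ℝ)
    (htn : ∀ φ, tnormSq φ = (t φ φ).re - m * ‖φ‖ ^ 2 + ‖φ‖ ^ 2)
    (hclosed : ∀ u : ℕ → H, (∀ k, u k ∈ dt) →
      (∀ ε > 0, ∃ N, ∀ j ≥ N, ∀ k ≥ N, tnormSq (u j - u k) < ε) →
      ∃ φ ∈ dt, Tendsto (fun k => tnormSq (u k - φ)) atTop (nhds 0))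
    -- `A` is a closed `|T|^(1/2)`-compact operator defined (at least) on `Dom t`
    (A : H →ₗ.[ℂ] H) (hdomA : dt ≤ A.domain)
    (hAclosed : IsClosed (A.graph : Set (H × H)))
    (hAcpt : ∀ (u : ℕ → H) (hu : ∀ k, u k ∈ dt), (∃ C, ∀ k, tnormSq (u k) ≤ C) →
      ∃ (g : ℕ → ℕ) (v : H), StrictMono g ∧
        Tendsto (fun k => A ⟨u (g k), hdomA (hu (g k))⟩) atTop (nhds v))
    -- `(T+A)* = T + A*`
    (hTAadj : (T + A).adjoint = T + A.adjoint)
    -- the relative form bound `|⟨Aφ,φ⟩| ≤ α t[φ] + β ‖φ‖²`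
    (α β : ℝ) (hα0 : 0 ≤ α) (hα1 : α < 1) (hβ : 0 ≤ β)
    (hbound : ∀ φ (hφ : φ ∈ dt), ‖(⟪φ, A ⟨φ, hdomA hφ⟩⟫ : ℂ)‖ ≤ α * (t φ φ).re + β * ‖φ‖ ^ 2)
    -- trial spaces
    (L : ℕ → Submodule ℂ H) (hL : ∀ n, L n ≤ dt)
    [∀ n, FiniteDimensional ℂ (L n)]
    (hLdense : ∀ φ ∈ dt, ∃ u : ℕ → H, (∀ n, u n ∈ L n) ∧
      Tendsto (fun n => tnormSq (φ - u n)) atTop (nhds 0))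
    -- compressions `T_n` of the form `t` and `S_n` of the form `s = t + ⟨A·,·⟩`
    (Tn Sn : ∀ n, L n →ₗ[ℂ] L n)
    (hTn : ∀ n, ∀ φ ψ : L n, (⟪ψ, Tn n φ⟫ : ℂ) = t (φ : H) (ψ : H))
    (hSn : ∀ n, ∀ φ ψ : L n, (⟪ψ, Sn n φ⟫ : ℂ) =
      t (φ : H) (ψ : H) + ⟪(ψ : H), A ⟨(φ : H), hdomA (hL n φ.2)⟩⟫)
    -- `Γ` is a compact `T_n`-regular subset of `ρ(T+A)`
    (Γ : Set ℂ) (hΓcpt : IsCompact Γ)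
    (hreg : ∃ δ > 0, ∃ N : ℕ, ∀ z ∈ Γ, ∀ n ≥ N, ∀ φ : L n, δ * ‖φ‖ ≤ ‖Tn n φ - z • φ‖)
    (hΓres : Γ ⊆ pmResolventSet (T + A)) :
    ∃ δ > 0, ∃ N : ℕ, ∀ z ∈ Γ, ∀ n ≥ N, ∀ φ : L n, δ * ‖φ‖ ≤ ‖Sn n φ - z • φ‖ :=
  stmt_2_general T hsa m dt t hdomt therm hcomp hlb tnormSq htn A hdomA hAcpt hTAadj α β hα1 hbound
    L hL hLdense Tn Sn hTn hSn Γ hΓcpt hreg hΓres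
end
end

section
/- Let T be a self-adjoint operator on a complex Hilbert space H and Q an orthogonal projection on H. Suppose (T + iQ − z)ψ = 0 for some ψ ≠ 0 and z ∉ ℝ. Then ⟨Tψ, ψ⟩ = (Re z)‖ψ‖², ‖Qψ‖² = (Im z)‖ψ‖², and ‖(T − Re z)ψ‖² = Im z (1 − Im z)‖ψ‖². -/
open scoped ComplexInnerProductSpace

noncomputable section

variable {H : Type*} [NormedAddCommGroup H] [InnerProductSpace ℂ H] [CompleteSpace H]

/-- If `(T + iQ - z)ψ = 0` with `ψ ≠ 0` and `z ∉ ℝ`, where `T` is self-adjoint and `Q` is an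
orthogonal projection, then `⟨Tψ,ψ⟩ = Re z ‖ψ‖²`, `‖Qψ‖² = Im z ‖ψ‖²`, and
`‖(T - Re z)ψ‖² = Im z (1 - Im z) ‖ψ‖²`. -/
theorem stmt_8
    (T : H →ₗ.[ℂ] H) (hsa : IsSelfAdjoint T)
    (Q : H →L[ℂ] H) (hQsa : IsSelfAdjoint Q) (hQidem : IsIdempotentElem Q)
    (z : ℂ) (hz : z.im ≠ 0)
    (ψ : T.domain) (hψ : ψ ≠ 0)
    (heig : T ψ + Complex.I • Q (ψ : H) - z • (ψ : H) = 0) :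
    (⟪(ψ : H), T ψ⟫ : ℂ) = ((z.re * ‖(ψ : H)‖ ^ 2 : ℝ) : ℂ) ∧
    ‖Q (ψ : H)‖ ^ 2 = z.im * ‖(ψ : H)‖ ^ 2 ∧
    ‖T ψ - (z.re : ℂ) • (ψ : H)‖ ^ 2 = z.im * (1 - z.im) * ‖(ψ : H)‖ ^ 2 := by
  set v : H := (ψ : H) with hv
  set n : ℝ := ‖v‖ ^ 2 with hn
  set m : ℝ := ‖Q v‖ ^ 2 with hm
  have hT : T ψ = z • v - Complex.I • Q v := by
    have h0 : T ψ + Complex.I • Q v = z • v := sub_eq_zero.mp heig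
    exact eq_sub_of_add_eq h0
  have hsym : T.IsFormalAdjoint T := by
    have hd := hsa.dense_domain
    have h := LinearPMap.adjoint_isFormalAdjoint hd (T := T)
    rwa [LinearPMap.isSelfAdjoint_def.mp hsa] at h
  have hq : (⟪v, Q v⟫ : ℂ) = ((m : ℝ) : ℂ) := by
    have h1 : Q (Q v) = Q v := by
      have := congrFun (congrArg (fun (A : H →L[ℂ] H) x => A x) hQidem) v
      simpa [ContinuousLinearMap.mul_apply] using this
    calc (⟪v, Q v⟫ : ℂ) = ⟪v, Q (Q v)⟫ := by rw [h1]
      _ = ⟪Q v, Q v⟫ := by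
          rw [← ContinuousLinearMap.adjoint_inner_right Q, hQsa.adjoint_eq]
      _ = ((m : ℝ) : ℂ) := by rw [inner_self_eq_norm_sq_to_K]; norm_cast
  have hvv : (⟪v, v⟫ : ℂ) = ((n : ℝ) : ℂ) := by rw [inner_self_eq_norm_sq_to_K]; norm_cast
  have hreal : (⟪v, T ψ⟫ : ℂ).im = 0 := by
    have h2 : (starRingEnd ℂ) ⟪v, T ψ⟫ = ⟪v, T ψ⟫ := by
      rw [inner_conj_symm]
      exact hsym ψ ψ
    exact Complex.conj_eq_iff_im.mp h2
  have hcomp : (⟪v, T ψ⟫ : ℂ) = z * ((n : ℝ) : ℂ) - Complex.I * ((m : ℝ) : ℂ) := by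
    rw [hT, inner_sub_right, inner_smul_right, inner_smul_right, hq, hvv]
  have him : m = z.im * n := by
    have h := hreal
    rw [hcomp] at h
    simp [Complex.sub_im, Complex.mul_im] at h
    linarith
  have hre : (⟪v, T ψ⟫ : ℂ) = ((z.re * n : ℝ) : ℂ) := by
    apply Complex.ext
    · rw [hcomp]; simp [Complex.sub_re, Complex.mul_re]
    · rw [hreal]; simp
  refine ⟨hre, him, ?_⟩
  have h3 : T ψ - (z.re : ℂ) • v = Complex.I • (((z.im : ℝ) : ℂ) • v - Q v) := by
    rw [hT]
    match_scalars
    · simp [Complex.ext_iff]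
    · simp [Complex.ext_iff]
  rw [h3, norm_smul]
  simp only [Complex.norm_I, one_mul]
  have expand : ‖((z.im : ℝ) : ℂ) • v - Q v‖ ^ 2 = z.im ^ 2 * n - 2 * (z.im * m) + m := by
    rw [@norm_sub_sq ℂ]
    have hi : (⟪((z.im : ℝ) : ℂ) • v, Q v⟫ : ℂ) = (((z.im * m : ℝ)) : ℂ) := by
      rw [inner_smul_left, hq]
      simp
    rw [hi]
    simp only [norm_smul, Complex.norm_real, Real.norm_eq_abs, RCLike.ofReal_re, RCLike.re_to_complex, Complex.ofReal_re, mul_pow, sq_abs,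
      ← hn, ← hm]

  rw [expand, him]
  ring
end
end

section
/- Let T be a self-adjoint operator on a complex Hilbert space H and Q an orthogonal projection on H. If (T + iQ − z)ψ = 0 for some ψ ≠ 0 and z ∉ ℝ, then dist(Re z, σ(T)) ≤ √(Im z (1 − Im z)). -/
open scoped ComplexInnerProductSpace

noncomputable section

variable {H : Type*} [NormedAddCommGroup H] [InnerProductSpace ℂ H] [CompleteSpace H]

/-!
Pairing the eigenvalue equation with `ψ` and taking imaginary parts gives
`‖Qψ‖² = Im z ‖ψ‖²`, so `(T - Re z)ψ = i (Im z ψ - Qψ)` has norm `√(Im z (1 - Im z)) ‖ψ‖`.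
It remains to see that `dist(a, σ(T)) ‖x‖ ≤ ‖(T - a)x‖` for real `a`. If the disc of radius `d`
around `a` misses `σ(T)`, the resolvent `S` at `a` is bounded and self-adjoint, and for
`|k| > 1/d` the resolvent identity between `S` and the resolvent at `a + 1/k` inverts `k - S`.
Hence `‖S‖`, which equals the spectral radius of `S`, is at most `1/d`.
-/

section Resolvent

variable {𝕜 E : Type*} [NontriviallyNormedField 𝕜] [NormedAddCommGroup E] [NormedSpace 𝕜 E]
  {T : E →ₗ.[𝕜] E} {z w : 𝕜} {R R' : E →L[𝕜] E}

def LinearPMap.IsResolvent (T : E →ₗ.[𝕜] E) (z : 𝕜) (R : E →L[𝕜] E) : Prop :=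
  (∀ y : E, ∃ hy : R y ∈ T.domain, T ⟨R y, hy⟩ - z • R y = y) ∧
    ∀ x : T.domain, R (T x - z • (x : E)) = x

theorem LinearPMap.IsResolvent.smul_apply_apply_eq_sub (hR : T.IsResolvent z R)
    (hR' : T.IsResolvent (z + w) R') (y : E) : w • R (R' y) = R' y - R y := by
  obtain ⟨hy, hRy⟩ := hR'.1 y
  have h : T ⟨R' y, hy⟩ - z • R' y = y + w • R' y := by
    linear_combination (norm := module) hRy
  have := hR.2 ⟨R' y, hy⟩
  rw [h, R.map_add, R.map_smul] at this
  exact eq_sub_of_add_eq' this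

theorem LinearPMap.IsResolvent.smul_apply_apply_eq_sub' (hR : T.IsResolvent z R)
    (hR' : T.IsResolvent (z + w) R') (y : E) : w • R' (R y) = R' y - R y := by
  obtain ⟨hy, hRy⟩ := hR.1 y
  have h : T ⟨R y, hy⟩ - (z + w) • R y = y - w • R y := by
    linear_combination (norm := module) hRy
  have := hR'.2 ⟨R y, hy⟩
  rw [h, R'.map_sub, R'.map_smul] at this
  exact eq_sub_of_add_eq' (sub_eq_iff_eq_add.mp this).symm

theorem LinearPMap.IsResolvent.inv_notMem_spectrum (hR : T.IsResolvent z R)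
    (hR' : T.IsResolvent (z + w) R') (hw : w ≠ 0) : w⁻¹ ∉ spectrum 𝕜 R := by
  rw [spectrum.notMem_iff, Algebra.algebraMap_eq_smul_one]
  refine ⟨⟨w⁻¹ • 1 - R, w • (1 + w • R'), ?_, ?_⟩, rfl⟩ <;> ext y <;>
    simp only [mul_apply_eq_comp, _root_.add_apply, one_apply_eq_self, _root_.sub_apply,
      _root_.smul_apply, _root_.map_smul, _root_.map_add, _root_.map_sub, smul_add, smul_sub]
  · rw [hR.smul_apply_apply_eq_sub hR' y, smul_inv_smul₀ hw, smul_inv_smul₀ hw]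
    module
  · rw [hR.smul_apply_apply_eq_sub' hR' y, inv_smul_smul₀ hw, inv_smul_smul₀ hw]
    module

end Resolvent

section Symmetric

variable {𝕜 E : Type*} [RCLike 𝕜] [NormedAddCommGroup E] [InnerProductSpace 𝕜 E]

open scoped InnerProductSpace

theorem IsStarProjection.inner_self_apply_eq_norm_sq [CompleteSpace E] {Q : E →L[𝕜] E}
    (hQ : IsStarProjection Q) (x : E) : ⟪x, Q x⟫_𝕜 = (‖Q x‖ ^ 2 : ℝ) := by
  calc ⟪x, Q x⟫_𝕜 = ⟪x, Q (Q x)⟫_𝕜 := by rw [← mul_apply_eq_comp, hQ.isIdempotentElem.eq]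
    _ = ⟪Q x, Q x⟫_𝕜 := (hQ.isSelfAdjoint.isSymmetric _ _).symm
    _ = (‖Q x‖ ^ 2 : ℝ) := by rw [inner_self_eq_norm_sq_to_K]; norm_cast

theorem LinearPMap.IsResolvent.isSymmetric {T : E →ₗ.[𝕜] E} (hT : T.IsFormalAdjoint T) {a : ℝ}
    {S : E →L[𝕜] E} (hS : T.IsResolvent (a : 𝕜) S) : (S : E →ₗ[𝕜] E).IsSymmetric := by
  intro x y
  obtain ⟨hx, hSx⟩ := hS.1 x
  obtain ⟨hy, hSy⟩ := hS.1 y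
  dsimp only [ContinuousLinearMap.coe_coe]
  conv_lhs => rw [← hSy]
  conv_rhs => rw [← hSx]
  rw [inner_sub_right, inner_sub_left, inner_smul_right, inner_smul_left, RCLike.conj_ofReal,
    hT ⟨S x, hx⟩ ⟨S y, hy⟩]

theorem LinearPMap.IsFormalAdjoint.im_inner_self_apply {T : E →ₗ.[𝕜] E}
    (hT : T.IsFormalAdjoint T) (x : T.domain) : RCLike.im ⟪(x : E), T x⟫_𝕜 = 0 :=
  RCLike.conj_eq_iff_im.mp <| by rw [inner_conj_symm]; exact hT x x

end Symmetric

section Spectrum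

variable {E : Type*} [NormedAddCommGroup E] [InnerProductSpace ℂ E]

theorem mem_pmResolventSet_iff {T : E →ₗ.[ℂ] E} {z : ℂ} :
    z ∈ pmResolventSet T ↔ ∃ R, T.IsResolvent z R :=
  Iff.rfl

theorem LinearPMap.IsResolvent.norm_le_inv [CompleteSpace E] {T : E →ₗ.[ℂ] E}
    (hT : T.IsFormalAdjoint T) {a : ℝ} {S : E →L[ℂ] E} (hS : T.IsResolvent (a : ℂ) S) {d : ℝ}
    (hd : 0 < d) (hball : Metric.ball (a : ℂ) d ⊆ pmResolventSet T) : ‖S‖ ≤ d⁻¹ := by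
  have hspec : ∀ k ∈ spectrum ℂ S, ‖k‖ ≤ d⁻¹ := by
    intro k hk
    by_contra! hlt
    have hk : k ≠ 0 := norm_pos_iff.mp ((inv_pos.mpr hd).trans hlt)
    obtain ⟨R, hR⟩ := mem_pmResolventSet_iff.mp <| hball <| show (a : ℂ) + k⁻¹ ∈ _ by
      rw [Metric.mem_ball, dist_self_add_left, norm_inv]
      exact inv_lt_of_inv_lt₀ hd hlt
    exact hS.inv_notMem_spectrum hR (inv_ne_zero hk) (by rwa [inv_inv])
  rw [← (hS.isSymmetric hT).isSelfAdjoint.toReal_spectralRadius_complex_eq_norm]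
  refine ENNReal.toReal_le_of_le_ofReal (by positivity) (iSup₂_le fun k hk => ?_)
  rw [ENNReal.le_ofReal_iff_toReal_le ENNReal.coe_ne_top (by positivity), ENNReal.coe_toReal,
    coe_nnnorm]
  exact hspec k hk

theorem infDist_pmSpectrum_mul_norm_le [CompleteSpace E] {T : E →ₗ.[ℂ] E}
    (hT : T.IsFormalAdjoint T) (a : ℝ) (x : T.domain) :
    Metric.infDist (a : ℂ) (pmSpectrum T) * ‖(x : E)‖ ≤ ‖T x - (a : ℂ) • (x : E)‖ := by
  by_contra! hlt
  have hx : 0 < ‖(x : E)‖ :=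
    pos_of_mul_pos_right ((norm_nonneg _).trans_lt hlt) Metric.infDist_nonneg
  obtain ⟨d, hd_gt, hd_lt⟩ := exists_between ((div_lt_iff₀ hx).mpr hlt)
  have hd : 0 < d := (div_nonneg (norm_nonneg _) hx.le).trans_lt hd_gt
  have hball : Metric.ball (a : ℂ) d ⊆ pmResolventSet T :=
    (Metric.ball_subset_ball hd_lt.le).trans Metric.ball_infDist_compl_subset
  obtain ⟨S, hS⟩ := mem_pmResolventSet_iff.mp (hball (Metric.mem_ball_self hd))
  have hx_le : ‖(x : E)‖ ≤ d⁻¹ * ‖T x - (a : ℂ) • (x : E)‖ :=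
    calc ‖(x : E)‖ = ‖S (T x - (a : ℂ) • (x : E))‖ := by rw [hS.2 x]
      _ ≤ ‖S‖ * ‖T x - (a : ℂ) • (x : E)‖ := S.le_opNorm _
      _ ≤ d⁻¹ * ‖T x - (a : ℂ) • (x : E)‖ := by gcongr; exact hS.norm_le_inv hT hd hball
  rw [div_lt_iff₀ hx] at hd_gt
  rw [← div_eq_inv_mul, le_div_iff₀ hd] at hx_le
  linarith

end Spectrum

section Eigenvector

open Complex

variable {E : Type*} [NormedAddCommGroup E] [InnerProductSpace ℂ E] [CompleteSpace E]
  {T : E →ₗ.[ℂ] E} {Q : E →L[ℂ] E} {z : ℂ} {ψ : T.domain}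

theorem norm_sq_apply_eq_im_mul_of_eigen (hT : T.IsFormalAdjoint T) (hQ : IsStarProjection Q)
    (heig : T ψ + I • Q (ψ : E) - z • (ψ : E) = 0) :
    ‖Q (ψ : E)‖ ^ 2 = z.im * ‖(ψ : E)‖ ^ 2 := by
  have h := congr(im ⟪(ψ : E), $heig⟫)
  rw [inner_sub_right, inner_add_right, inner_smul_right, inner_smul_right,
    hQ.inner_self_apply_eq_norm_sq, inner_self_eq_norm_sq_to_K] at h
  have hT0 : im ⟪(ψ : E), T ψ⟫ = 0 := hT.im_inner_self_apply ψ
  simp only [coe_algebraMap, ← ofReal_pow, sub_im, add_im, mul_im, I_re, I_im, ofReal_re,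
    ofReal_im, hT0, inner_zero_right, zero_im] at h
  linarith

theorem norm_sub_re_smul_eq_of_eigen (hT : T.IsFormalAdjoint T) (hQ : IsStarProjection Q)
    (heig : T ψ + I • Q (ψ : E) - z • (ψ : E) = 0) :
    ‖T ψ - (z.re : ℂ) • (ψ : E)‖ = √(z.im * (1 - z.im)) * ‖(ψ : E)‖ := by
  have hv : T ψ - (z.re : ℂ) • (ψ : E) = I • ((z.im : ℂ) • (ψ : E) - Q ψ) := by
    linear_combination (norm := module) heig - (re_add_im z) • (ψ : E)
  have hq := norm_sq_apply_eq_im_mul_of_eigen hT hQ heig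
  have hsq : ‖T ψ - (z.re : ℂ) • (ψ : E)‖ ^ 2 = z.im * (1 - z.im) * ‖(ψ : E)‖ ^ 2 := by
    rw [hv, norm_smul, norm_I, one_mul, @norm_sub_sq ℂ, inner_smul_left,
      hQ.inner_self_apply_eq_norm_sq, norm_smul]
    simp only [coe_algebraMap, conj_ofReal, ← ofReal_mul, RCLike.re_to_complex, ofReal_re,
      norm_real, Real.norm_eq_abs, mul_pow, sq_abs, hq]
    ring
  rw [← Real.sqrt_sq (norm_nonneg _), hsq, Real.sqrt_mul' _ (sq_nonneg _),
    Real.sqrt_sq (norm_nonneg _)]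

end Eigenvector

theorem stmt_9_general
    (T : H →ₗ.[ℂ] H) (hsa : IsSelfAdjoint T)
    (Q : H →L[ℂ] H) (hQsa : IsSelfAdjoint Q) (hQidem : IsIdempotentElem Q)
    (z : ℂ)
    (ψ : T.domain) (hψ : ψ ≠ 0)
    (heig : T ψ + Complex.I • Q (ψ : H) - z • (ψ : H) = 0) :
    Metric.infDist ((z.re : ℂ)) (pmSpectrum T) ≤ Real.sqrt (z.im * (1 - z.im)) := by
  have hT : T.IsFormalAdjoint T := by
    simpa only [LinearPMap.isSelfAdjoint_def.mp hsa] using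
      LinearPMap.adjoint_isFormalAdjoint hsa.dense_domain
  have hψ_pos : 0 < ‖(ψ : H)‖ := norm_pos_iff.mpr (by simpa using hψ)
  have h := infDist_pmSpectrum_mul_norm_le hT z.re ψ
  rw [norm_sub_re_smul_eq_of_eigen hT ⟨hQidem, hQsa⟩ heig] at h
  exact le_of_mul_le_mul_right h hψ_pos

/-- If `(T + iQ - z)ψ = 0` with `ψ ≠ 0` and `z ∉ ℝ`, where `T` is self-adjoint and `Q` is an
orthogonal projection, then `dist(Re z, σ(T)) ≤ √(Im z (1 - Im z))`. -/
theorem stmt_9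
    (T : H →ₗ.[ℂ] H) (hsa : IsSelfAdjoint T)
    (Q : H →L[ℂ] H) (hQsa : IsSelfAdjoint Q) (hQidem : IsIdempotentElem Q)
    (z : ℂ) (hz : z.im ≠ 0)
    (ψ : T.domain) (hψ : ψ ≠ 0)
    (heig : T ψ + Complex.I • Q (ψ : H) - z • (ψ : H) = 0) :
    Metric.infDist ((z.re : ℂ)) (pmSpectrum T) ≤ Real.sqrt (z.im * (1 - z.im)) :=
  stmt_9_general T hsa Q hQsa hQidem z ψ hψ heig
end
end

section
/- Let T be a self-adjoint operator on a complex Hilbert space H, Q an orthogonal projection on H, λ ∈ ℝ, and φ ∈ Dom(T) with (T + iQ − (λ + i))φ = 0. Then Tφ = λφ and Qφ = φ. -/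
open scoped ComplexInnerProductSpace

noncomputable section

variable {H : Type*} [NormedAddCommGroup H] [InnerProductSpace ℂ H] [CompleteSpace H]

/-- If `T` is self-adjoint, `Q` is an orthogonal projection, `λ ∈ ℝ` and
`(T + iQ - (λ + i))φ = 0` for `φ ∈ Dom T`, then `Tφ = λφ` and `Qφ = φ`. -/
theorem stmt_14
    (T : H →ₗ.[ℂ] H) (hsa : IsSelfAdjoint T)
    (Q : H →L[ℂ] H) (hQsa : IsSelfAdjoint Q) (hQidem : IsIdempotentElem Q)
    (lam : ℝ) (φ : T.domain)
    (heig : T φ + Complex.I • Q (φ : H) - ((lam : ℂ) + Complex.I) • (φ : H) = 0) :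
    T φ = (lam : ℂ) • (φ : H) ∧ Q (φ : H) = (φ : H) := by
  have hdense : Dense (T.domain : Set H) := hsa.dense_domain
  have hTeq : LinearPMap.adjoint T = T := hsa
  have hsym : ∀ x y : T.domain, ⟪T x, (y : H)⟫ = ⟪(x : H), T y⟫ := by
    have h := LinearPMap.adjoint_isFormalAdjoint (T := T) hdense
    rw [hTeq] at h
    exact h
  -- T φ in terms of φ and Q φ
  have hTφ : T φ = ((lam : ℂ) + Complex.I) • (φ : H) - Complex.I • Q (φ : H) := by
    rw [sub_eq_zero] at heig
    rw [← heig]; abel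
  set a : ℂ := ⟪(φ : H), T φ⟫ with ha
  set p : ℂ := ⟪(φ : H), (φ : H)⟫ with hp
  set q : ℂ := ⟪(Q (φ : H)), (Q (φ : H))⟫ with hq
  have hQsym : ∀ x y : H, ⟪Q x, y⟫ = ⟪x, Q y⟫ := hQsa.isSymmetric
  have hQQ : Q (Q (φ : H)) = Q (φ : H) := by
    have := DFunLike.congr_fun hQidem (φ : H)
    simpa using this
  have hφQφ : ⟪(φ : H), Q (φ : H)⟫ = q := by
    calc ⟪(φ : H), Q (φ : H)⟫ = ⟪(φ : H), Q (Q (φ : H))⟫ := by rw [hQQ]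
      _ = ⟪Q (φ : H), Q (φ : H)⟫ := (hQsym _ _).symm
  have hca : (starRingEnd ℂ) a = a := by
    rw [ha, inner_conj_symm, hsym]
  have hcp : (starRingEnd ℂ) p = p := by rw [hp, inner_conj_symm]
  have hcq : (starRingEnd ℂ) q = q := by rw [hq, inner_conj_symm]
  have h1 : a = ((lam : ℂ) + Complex.I) * p - Complex.I * q := by
    rw [ha, hTφ, inner_sub_right, inner_smul_right, inner_smul_right, hφQφ, ← hp]
  have h2 : a = ((lam : ℂ) - Complex.I) * p + Complex.I * q := by
    conv_lhs => rw [← hca, h1]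
    rw [map_sub, map_mul, map_mul, map_add, hcp, hcq, Complex.conj_I,
      Complex.conj_ofReal]
    ring
  have hpq : p = q := by
    have h3 : 2 * Complex.I * (p - q) = 0 := by
      rw [h1] at h2
      linear_combination h2
    rcases mul_eq_zero.mp h3 with h | h
    · exact absurd h (by simp [Complex.I_ne_zero])
    · exact sub_eq_zero.mp h
  have hQφ : Q (φ : H) = (φ : H) := by
    have hz : ⟪(φ : H) - Q (φ : H), (φ : H) - Q (φ : H)⟫ = 0 := by
      rw [inner_sub_sub_self, hφQφ]
      have hQφφ : ⟪Q (φ : H), (φ : H)⟫ = q := by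
        rw [← inner_conj_symm, hφQφ, hcq]
      rw [hQφφ, ← hp, ← hq, hpq]
      ring
    have := inner_self_eq_zero.mp hz
    rw [sub_eq_zero] at this
    exact this.symm
  refine ⟨?_, hQφ⟩
  rw [hTφ, hQφ, add_smul]
  abel
end
end
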